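/- θ(p_c) = 0 if and only if the functions σ_N converge uniformly to σ on the interval (0, p_c), where σ_N(p) = Σ_{1 ≤ n ≤ N} Σ_{m≥0} σ_{n,m} p^n (1−p)^m and σ(p) = Σ_{n≥1} Σ_{m≥0} σ_{n,m} p^n (1−p)^m. -/
import Mathlib


open Filter Topology

noncomputable section

/-- Vertices of the hypercubic lattice `ℤ^d`. -/
abbrev V (d : ℕ) := Fin d → ℤ

/-- Two vertices of `ℤ^d` are adjacent when they are at Euclidean distance 1,
i.e. at ℓ¹-distance 1. -/
def latticeAdj (d : ℕ) (x y : V d) : Prop := (∑ i, |x i - y i|) = 1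

/-- `e` is an edge of the hypercubic lattice `ℤ^d`. -/
def isEdge (d : ℕ) (e : Sym2 (V d)) : Prop := ∃ x y : V d, latticeAdj d x y ∧ e = s(x, y)

/-- Two (unordered) edges share an endpoint. -/
def sharesEndpoint {d : ℕ} (e e' : Sym2 (V d)) : Prop := ∃ v : V d, v ∈ e ∧ v ∈ e'

/-- A lattice animal: the edge set of a finite connected subgraph of `ℤ^d`,
expressed as a finite set of lattice edges that is connected under sharing endpoints. -/
def IsAnimal (d : ℕ) (A : Finset (Sym2 (V d))) : Prop :=
  (∀ e ∈ A, isEdge d e) ∧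
  ∀ e ∈ A, ∀ e' ∈ A,
    Relation.ReflTransGen (fun a b => a ∈ A ∧ b ∈ A ∧ sharesEndpoint a b) e e'

/-- The set of edges outlying to a lattice animal `A`: lattice edges not in `A`
sharing an endpoint with some edge of `A`. -/
def outlying (d : ℕ) (A : Finset (Sym2 (V d))) : Set (Sym2 (V d)) :=
  {e | isEdge d e ∧ e ∉ A ∧ ∃ e' ∈ A, sharesEndpoint e e'}

/-- `sigmaA d n m` is the number of lattice animals in `ℤ^d` one of whose edges contains
the origin, having `n` edges and `m` outlying edges. -/
def sigmaA (d n m : ℕ) : ℕ :=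
  {A : Finset (Sym2 (V d)) | IsAnimal d A ∧ (∃ e ∈ A, (0 : V d) ∈ e) ∧
    A.card = n ∧ (outlying d A).ncard = m}.ncard

/-- `fn d n β = (σ_{n,⌊βn⌋})^{1/n}`. -/
def fn (d n : ℕ) (β : ℝ) : ℝ := (sigmaA d n ⌊β * n⌋₊ : ℝ) ^ ((1 : ℝ) / n)

/-- `Fsum d n p = Σ_m σ_{n,m} p^n (1-p)^m`, the probability that the cluster of the
origin has exactly `n` edges. -/
def Fsum (d n : ℕ) (p : ℝ) : ℝ := ∑' m : ℕ, (sigmaA d n m : ℝ) * p ^ n * (1 - p) ^ m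

/-- The percolation probability `θ(p)`. -/
def theta (d : ℕ) (p : ℝ) : ℝ := 1 - (1 - p) ^ (2 * d) - ∑' n : ℕ, Fsum d (n + 1) p

/-- The critical value `p_c`. -/
def pc (d : ℕ) : ℝ := sInf {p : ℝ | 0 < p ∧ p < 1 ∧ 0 < theta d p}

/-- `α = 1/p_c - 1`. -/
def alpha (d : ℕ) : ℝ := 1 / pc d - 1

/-- The assertion that `f` is the asymptotic limit of the functions `f_n`
at every `β ∈ [0,∞)` with `β ≠ 2(d-1)`. -/
def FLim (d : ℕ) (f : ℝ → ℝ) : Prop :=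
  ∀ β : ℝ, 0 ≤ β → β ≠ 2 * ((d : ℝ) - 1) →
    Tendsto (fun n : ℕ => fn d n β) atTop (𝓝 (f β))

/-- `g(β) = f(β) β^β / (β+1)^{β+1}`. -/
def gfun (f : ℝ → ℝ) (β : ℝ) : ℝ := f β * β ^ β / (β + 1) ^ (β + 1)

/-- `φ(a, β) = (β+1) log(β+1) − β log β + β log a − (β+1) log(a+1)`. -/
def phi (a β : ℝ) : ℝ :=
  (β + 1) * Real.log (β + 1) - β * Real.log β + β * Real.log a - (β + 1) * Real.log (a + 1)

/-- Hypothesis (ς): the exponent with which `g` falls away from 1 as `β` rises above `α`. -/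
def HypSigma (d : ℕ) (f : ℝ → ℝ) (ς : ℝ) : Prop :=
  sSup {b : ℝ | 0 ≤ b ∧
      liminf (fun δ : ℝ => (((gfun f (alpha d + δ) - 1) / δ ^ b : ℝ) : EReal)) (𝓝[>] 0) = 0} = ς ∧
  sInf {b : ℝ | 0 ≤ b ∧
      limsup (fun δ : ℝ => (((gfun f (alpha d + δ) - 1) / δ ^ b : ℝ) : EReal)) (𝓝[>] 0) = ⊥} = ς

/-- `t n` is the least `p ∈ (0, p_c]` at which `p ↦ Σ_m σ_{n,m} p^n (1-p)^m` attains its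
supremum over `(0, p_c]`. -/
def IsTn (d : ℕ) (t : ℕ → ℝ) : Prop :=
  ∀ n : ℕ, 1 ≤ n →
    IsLeast {p : ℝ | p ∈ Set.Ioc 0 (pc d) ∧
      Fsum d n p = sSup (Fsum d n '' Set.Ioc 0 (pc d))} (t n)

/-- `α_n`, defined by `t_n = 1/(1+α_n)`. -/
def alphaN (t : ℕ → ℝ) (n : ℕ) : ℝ := 1 / t n - 1

/-- Hypothesis (λ): the exponent of polynomial decay of `p_c - t_n`. -/
def HypLambda (d : ℕ) (t : ℕ → ℝ) (lam : ℝ) : Prop :=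
  sSup {b : ℝ | 0 ≤ b ∧
      limsup (fun n : ℕ => (((pc d - t n) * (n : ℝ) ^ b : ℝ) : EReal)) atTop = 0} = lam ∧
  sInf {b : ℝ | 0 ≤ b ∧
      liminf (fun n : ℕ => (((pc d - t n) * (n : ℝ) ^ b : ℝ) : EReal)) atTop = ⊤} = lam

/-- The assertion that `q p` is the exponential decay rate in `n` of the probability
that the cluster of the origin has exactly `n` edges, for each subcritical `p`. -/
def QLim (d : ℕ) (q : ℝ → ℝ) : Prop :=
  ∀ p ∈ Set.Ioo (0 : ℝ) (pc d),
    Tendsto (fun n : ℕ => -Real.log (Fsum d n p) / n) atTop (𝓝 (q p))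

/-- Hypothesis (ϱ): the exponent for correlation size. -/
def HypRho (d : ℕ) (q : ℝ → ℝ) (ρ : ℝ) : Prop :=
  sSup {γ : ℝ | 0 ≤ γ ∧
      limsup (fun p : ℝ => ((q p / (pc d - p) ^ γ : ℝ) : EReal)) (𝓝[<] pc d) = 0} = ρ ∧
  sInf {γ : ℝ | 0 ≤ γ ∧
      liminf (fun p : ℝ => ((q p / (pc d - p) ^ γ : ℝ) : EReal)) (𝓝[<] pc d) = ⊤} = ρ

/-- `a_n(β) = (f_n(β)/f(β))^n`. -/
def an (d : ℕ) (f : ℝ → ℝ) (n : ℕ) (β : ℝ) : ℝ := (fn d n β / f β) ^ n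

namespace Work

variable {d : ℕ}

lemma latticeAdj_symm {x y : V d} (h : latticeAdj d x y) : latticeAdj d y x := by
  unfold latticeAdj at *
  rw [← h]
  exact Finset.sum_congr rfl fun i _ => abs_sub_comm _ _

def nbr (x : V d) (q : Fin d × Bool) : V d :=
  Function.update x q.1 (x q.1 + if q.2 then 1 else -1)

lemma adj_iff {x y : V d} : latticeAdj d x y ↔ ∃ q : Fin d × Bool, y = nbr x q := by
  constructor
  · intro h
    unfold latticeAdj at h
    have hex : ∃ i, x i ≠ y i := by
      by_contra hc
      push_neg at hc
      simp only [show ∀ i, |x i - y i| = 0 from fun i => by rw [hc i]; simp,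
        Finset.sum_const_zero] at h
      exact one_ne_zero h.symm
    obtain ⟨i, hi⟩ := hex
    have hsplit : ∑ j ∈ (Finset.univ.erase i), |x j - y j| + |x i - y i| = 1 := by
      rw [Finset.sum_erase_add _ _ (Finset.mem_univ i)]; exact h
    have h1 : 1 ≤ |x i - y i| := Int.one_le_abs (sub_ne_zero.mpr hi)
    have hrest : ∑ j ∈ (Finset.univ.erase i), |x j - y j| = 0 := by
      have hnn : 0 ≤ ∑ j ∈ (Finset.univ.erase i), |x j - y j| :=
        Finset.sum_nonneg fun j _ => abs_nonneg _
      omega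
    have hrest' : ∀ j, j ≠ i → x j = y j := by
      intro j hj
      have := (Finset.sum_eq_zero_iff_of_nonneg (fun k _ => abs_nonneg (x k - y k))).mp hrest j
        (Finset.mem_erase.mpr ⟨hj, Finset.mem_univ j⟩)
      have := abs_eq_zero.mp this
      omega
    have hi1 : |x i - y i| = 1 := by omega
    rcases abs_eq (by norm_num : (0:ℤ) ≤ 1) |>.mp hi1 with hp | hm
    · exact ⟨(i, false), funext fun j => by
        by_cases hji : j = i
        · subst hji; simp [nbr]; omega
        · simp [nbr, Function.update_of_ne hji, (hrest' j hji).symm]⟩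
    · exact ⟨(i, true), funext fun j => by
        by_cases hji : j = i
        · subst hji; simp [nbr]; omega
        · simp [nbr, Function.update_of_ne hji, (hrest' j hji).symm]⟩
  · rintro ⟨⟨i, b⟩, rfl⟩
    unfold latticeAdj
    rw [Finset.sum_eq_single_of_mem i (Finset.mem_univ i)]
    · cases b <;> simp [nbr] <;> omega
    · intro j _ hj
      simp [nbr, Function.update_of_ne hj]

lemma nbr_ne (x : V d) (q : Fin d × Bool) : nbr x q ≠ x := by
  intro h
  have := congrFun h q.1
  simp only [nbr, Function.update_self] at this
  cases q.2 <;> simp at this <;> omega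

def edgesAt (x : V d) : Finset (Sym2 (V d)) :=
  Finset.univ.image (fun q : Fin d × Bool => s(x, nbr x q))

lemma mem_edgesAt {x : V d} {e : Sym2 (V d)} : e ∈ edgesAt x ↔ isEdge d e ∧ x ∈ e := by
  constructor
  · intro h
    obtain ⟨q, _, rfl⟩ := Finset.mem_image.mp h
    exact ⟨⟨x, nbr x q, adj_iff.mpr ⟨q, rfl⟩, rfl⟩, Sym2.mem_mk_left _ _⟩
  · rintro ⟨⟨a, b, hab, rfl⟩, hx⟩
    rcases Sym2.mem_iff.mp hx with h | h
    · subst h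
      obtain ⟨q, rfl⟩ := adj_iff.mp hab
      exact Finset.mem_image.mpr ⟨q, Finset.mem_univ q, rfl⟩
    · subst h
      obtain ⟨q, rfl⟩ := adj_iff.mp (latticeAdj_symm hab)
      rw [Sym2.eq_swap]
      exact Finset.mem_image.mpr ⟨q, Finset.mem_univ q, rfl⟩

lemma card_edgesAt_le (x : V d) : (edgesAt x).card ≤ 2 * d := by
  calc (edgesAt x).card ≤ (Finset.univ : Finset (Fin d × Bool)).card := Finset.card_image_le
  _ = 2 * d := by simp [Finset.card_univ, mul_comm]

lemma nbr_injective (x : V d) : Function.Injective (nbr x) := by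
  rintro ⟨i, b⟩ ⟨i', b'⟩ h
  by_cases hii : i = i'
  · subst hii
    have := congrFun h i
    simp only [nbr, Function.update_self] at this
    cases b <;> cases b' <;> simp_all <;> omega
  · exfalso
    have h1 := congrFun h i
    simp only [nbr, Function.update_self, Function.update_of_ne hii] at h1
    cases b <;> simp at h1 <;> omega

lemma card_edgesAt (x : V d) : (edgesAt x).card = 2 * d := by
  rw [edgesAt, Finset.card_image_of_injective _ ?_, Finset.card_univ]
  · simp [mul_comm]
  · intro q q' h
    rw [Sym2.eq_iff] at h
    rcases h with ⟨-, h⟩ | ⟨h, -⟩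
    · exact nbr_injective x h
    · exact absurd h.symm (nbr_ne x q')

-- outlying finiteness and sigma vanishing
lemma nearEdge_finite (e : Sym2 (V d)) :
    ∃ B : Finset (Sym2 (V d)), B.card ≤ 4 * d ∧
      ∀ f, isEdge d f → sharesEndpoint f e → f ∈ B := by
  induction e using Sym2.ind with
  | _ x y =>
    refine ⟨edgesAt x ∪ edgesAt y, ?_, ?_⟩
    · calc (edgesAt x ∪ edgesAt y).card ≤ (edgesAt x).card + (edgesAt y).card :=
        Finset.card_union_le _ _
      _ ≤ 4 * d := by have := card_edgesAt_le x; have := card_edgesAt_le y; omega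
    · rintro f hf ⟨v, hv1, hv2⟩
      rcases Sym2.mem_iff.mp hv2 with rfl | rfl
      · exact Finset.mem_union_left _ (mem_edgesAt.mpr ⟨hf, hv1⟩)
      · exact Finset.mem_union_right _ (mem_edgesAt.mpr ⟨hf, hv1⟩)

lemma outlying_subset_finset (A : Finset (Sym2 (V d))) :
    ∃ B : Finset (Sym2 (V d)), B.card ≤ 4 * d * A.card ∧ outlying d A ⊆ ↑B := by
  have h : ∀ e : {e // e ∈ A}, ∃ B : Finset (Sym2 (V d)), B.card ≤ 4 * d ∧
      ∀ f, isEdge d f → sharesEndpoint f e.1 → f ∈ B := fun e => nearEdge_finite e.1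
  choose B hB1 hB2 using h
  refine ⟨A.attach.biUnion B, ?_, ?_⟩
  · calc (A.attach.biUnion B).card ≤ ∑ e ∈ A.attach, (B e).card := Finset.card_biUnion_le
    _ ≤ ∑ _e ∈ A.attach, 4 * d := Finset.sum_le_sum fun e _ => hB1 e
    _ = 4 * d * A.card := by rw [Finset.sum_const, Finset.card_attach]; ring
  · rintro f ⟨hf, hfA, e', he', hsh⟩
    exact Finset.mem_coe.mpr (Finset.mem_biUnion.mpr
      ⟨⟨e', he'⟩, Finset.mem_attach _ _, hB2 ⟨e', he'⟩ f hf hsh⟩)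

lemma outlying_finite (A : Finset (Sym2 (V d))) : (outlying d A).Finite := by
  obtain ⟨B, -, hB⟩ := outlying_subset_finset A
  exact Set.Finite.subset (B.finite_toSet) hB

lemma outlying_ncard_le (A : Finset (Sym2 (V d))) :
    (outlying d A).ncard ≤ 4 * d * A.card := by
  obtain ⟨B, hB1, hB⟩ := outlying_subset_finset A
  calc (outlying d A).ncard ≤ (↑B : Set (Sym2 (V d))).ncard :=
    Set.ncard_le_ncard hB (B.finite_toSet)
  _ = B.card := Set.ncard_coe_finset B
  _ ≤ 4 * d * A.card := hB1

lemma sigmaA_eq_zero {n m : ℕ} (h : 4 * d * n < m) : sigmaA d n m = 0 := by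
  have : {A : Finset (Sym2 (V d)) | IsAnimal d A ∧ (∃ e ∈ A, (0 : V d) ∈ e) ∧
      A.card = n ∧ (outlying d A).ncard = m} = ∅ := by
    ext A
    simp only [Set.mem_setOf_eq, Set.mem_empty_iff_false, iff_false]
    rintro ⟨-, -, hcard, hout⟩
    have h2 := outlying_ncard_le A
    rw [hcard, hout] at h2
    exact Nat.lt_irrefl _ (lt_of_le_of_lt h2 h)
  rw [sigmaA, this, Set.ncard_empty]

lemma Fsum_eq (n : ℕ) (p : ℝ) :
    Fsum d n p = ∑ m ∈ Finset.range (4 * d * n + 1),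
      (sigmaA d n m : ℝ) * p ^ n * (1 - p) ^ m := by
  apply tsum_eq_sum
  intro m hm
  rw [Finset.mem_range, not_lt] at hm
  rw [sigmaA_eq_zero (by omega)]
  simp

lemma continuous_Fsum (n : ℕ) : Continuous (fun p : ℝ => Fsum d n p) := by
  have : (fun p : ℝ => Fsum d n p) = fun p => ∑ m ∈ Finset.range (4 * d * n + 1),
      (sigmaA d n m : ℝ) * p ^ n * (1 - p) ^ m := funext fun p => Fsum_eq n p
  rw [this]
  exact continuous_finset_sum _ fun m _ => by fun_prop

lemma Fsum_nonneg {p : ℝ} (h0 : 0 ≤ p) (h1 : p ≤ 1) (n : ℕ) : 0 ≤ Fsum d n p := by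
  rw [Fsum_eq]
  exact Finset.sum_nonneg fun m _ => mul_nonneg (mul_nonneg (Nat.cast_nonneg _)
    (pow_nonneg h0 _)) (pow_nonneg (by linarith) _)
-- finite configuration-space probability
section Config
variable {α : Type*} [DecidableEq α]

lemma total_sum (F : Finset α) (p : ℝ) :
    ∑ ω ∈ F.powerset, p ^ ω.card * (1 - p) ^ (F \ ω).card = 1 := by
  have h := Finset.prod_add (fun _ : α => p) (fun _ : α => 1 - p) F
  simp only [Finset.prod_const] at h
  have h2 : ∀ ω ∈ F.powerset, (p ^ ω.card * (1 - p) ^ (F \ ω).card : ℝ)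
      = p ^ ω.card * (1 - p) ^ (F \ ω).card := fun _ _ => rfl
  rw [← h]
  simp

lemma cyl_sum (F O C : Finset α) (hO : O ⊆ F) (hC : C ⊆ F) (hOC : Disjoint O C) (p : ℝ) :
    ∑ ω ∈ F.powerset.filter (fun ω => O ⊆ ω ∧ Disjoint C ω),
      p ^ ω.card * (1 - p) ^ (F \ ω).card = p ^ O.card * (1 - p) ^ C.card := by
  set R := (F \ O) \ C with hR
  have hROdisj : Disjoint O R := by
    rw [hR]
    exact Finset.disjoint_of_subset_right (Finset.sdiff_subset)
      (Finset.disjoint_sdiff)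
  have key : ∀ t ∈ R.powerset, F \ (O ∪ t) = C ∪ (R \ t) := by
    intro t ht
    rw [Finset.mem_powerset] at ht
    ext a
    simp only [Finset.mem_sdiff, Finset.mem_union, hR]
    constructor
    · rintro ⟨haF, ha⟩
      push_neg at ha
      by_cases haC : a ∈ C
      · exact Or.inl haC
      · exact Or.inr ⟨⟨⟨haF, ha.1⟩, haC⟩, ha.2⟩
    · rintro (haC | ⟨⟨⟨haF, haO⟩, haC⟩, hat⟩)
      · exact ⟨hC haC, not_or_intro (Finset.disjoint_right.mp hOC haC)
          (fun hat => (Finset.mem_sdiff.mp (ht hat)).2 haC)⟩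
      · exact ⟨haF, not_or_intro haO hat⟩
  have hcard1 : ∀ t ∈ R.powerset, (O ∪ t).card = O.card + t.card := by
    intro t ht
    rw [Finset.mem_powerset] at ht
    exact Finset.card_union_of_disjoint (Finset.disjoint_of_subset_right ht hROdisj)
  have hcard2 : ∀ t ∈ R.powerset, (F \ (O ∪ t)).card = C.card + (R \ t).card := by
    intro t ht
    rw [key t ht]
    refine Finset.card_union_of_disjoint ?_
    exact Finset.disjoint_of_subset_right (Finset.sdiff_subset)
      (hR ▸ Finset.disjoint_sdiff)
  rw [Finset.sum_nbij' (i := fun ω => ω \ O) (j := fun t => O ∪ t)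
    (t := R.powerset) (g := fun t => p ^ (O ∪ t).card * (1 - p) ^ (F \ (O ∪ t)).card)]
  · calc ∑ t ∈ R.powerset, p ^ (O ∪ t).card * (1 - p) ^ (F \ (O ∪ t)).card
        = ∑ t ∈ R.powerset, (p ^ O.card * (1 - p) ^ C.card) *
            (p ^ t.card * (1 - p) ^ (R \ t).card) := by
          refine Finset.sum_congr rfl fun t ht => ?_
          rw [hcard1 t ht, hcard2 t ht, pow_add, pow_add]; ring
      _ = p ^ O.card * (1 - p) ^ C.card := by
          rw [← Finset.mul_sum, total_sum R p, mul_one]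
  · intro ω hω
    simp only [Finset.mem_filter, Finset.mem_powerset] at hω
    obtain ⟨hωF, hOω, hCω⟩ := hω
    rw [Finset.mem_powerset, hR]
    intro a ha
    rw [Finset.mem_sdiff] at ha
    exact Finset.mem_sdiff.mpr ⟨Finset.mem_sdiff.mpr ⟨hωF ha.1, ha.2⟩,
      Finset.disjoint_right.mp hCω ha.1⟩
  · intro t ht
    simp only [Finset.mem_powerset] at ht
    simp only [Finset.mem_filter, Finset.mem_powerset]
    refine ⟨Finset.union_subset hO (fun a ha => (Finset.mem_sdiff.mp
      (Finset.mem_sdiff.mp (ht ha)).1).1), Finset.subset_union_left, ?_⟩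
    rw [Finset.disjoint_union_right]
    exact ⟨hOC.symm, Finset.disjoint_of_subset_right ht (hR ▸ Finset.disjoint_sdiff)⟩
  · intro ω hω
    simp only [Finset.mem_filter, Finset.mem_powerset] at hω
    exact Finset.union_sdiff_of_subset hω.2.1
  · intro t ht
    simp only [Finset.mem_powerset] at ht
    exact Finset.union_sdiff_cancel_left (Finset.disjoint_of_subset_right ht hROdisj)
  · intro ω hω
    simp only [Finset.mem_filter, Finset.mem_powerset] at hω
    rw [Finset.union_sdiff_of_subset hω.2.1]

end Config
-- outF and cluster uniqueness, key inequality
def outF (d : ℕ) (A : Finset (Sym2 (V d))) : Finset (Sym2 (V d)) :=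
  (outlying_finite A).toFinset

lemma mem_outF {A f} : f ∈ outF d A ↔ f ∈ outlying d A := Set.Finite.mem_toFinset _

lemma card_outF (A : Finset (Sym2 (V d))) : (outF d A).card = (outlying d A).ncard := by
  rw [outF, Set.ncard_eq_toFinset_card _ (outlying_finite A)]

lemma step_mem {A : Finset (Sym2 (V d))} {ω : Finset (Sym2 (V d))}
    (hAd : Disjoint (outF d A) ω) {e f : Sym2 (V d)}
    (he : e ∈ A) (hf : isEdge d f) (hsh : sharesEndpoint f e) (hfω : f ∈ ω) : f ∈ A := by
  by_contra hfA
  have : f ∈ outF d A := mem_outF.mpr ⟨hf, hfA, e, he, hsh⟩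
  exact (Finset.disjoint_left.mp hAd this) hfω

lemma animal_subset {A B : Finset (Sym2 (V d))} (hA : IsAnimal d A) (hB : IsAnimal d B)
    (hA0 : ∃ e ∈ A, (0 : V d) ∈ e) (hB0 : ∃ e ∈ B, (0 : V d) ∈ e)
    {ω : Finset (Sym2 (V d))} (hAd : Disjoint (outF d A) ω) (hBs : B ⊆ ω) : B ⊆ A := by
  obtain ⟨e0, he0, h0e⟩ := hA0
  obtain ⟨f0, hf0, h0f⟩ := hB0
  have hf0A : f0 ∈ A := step_mem hAd he0 (hB.1 f0 hf0) ⟨0, h0f, h0e⟩ (hBs hf0)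
  intro e he
  have hrel := hB.2 f0 hf0 e he
  induction hrel with
  | refl => exact hf0A
  | tail _hab hr ih =>
    obtain ⟨hbB, hcB, hsh⟩ := hr
    obtain ⟨v, hv1, hv2⟩ := hsh
    exact step_mem hAd (ih hbB) (hB.1 _ hcB) ⟨v, hv2, hv1⟩ (hBs hcB)

lemma animal_eq {A B : Finset (Sym2 (V d))} (hA : IsAnimal d A) (hB : IsAnimal d B)
    (hA0 : ∃ e ∈ A, (0 : V d) ∈ e) (hB0 : ∃ e ∈ B, (0 : V d) ∈ e)
    {ω : Finset (Sym2 (V d))} (hAs : A ⊆ ω) (hAd : Disjoint (outF d A) ω)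
    (hBs : B ⊆ ω) (hBd : Disjoint (outF d B) ω) : A = B :=
  Finset.Subset.antisymm (animal_subset hB hA hB0 hA0 hBd hAs)
    (animal_subset hA hB hA0 hB0 hAd hBs)

lemma key_ineq {p : ℝ} (hp0 : 0 ≤ p) (hp1 : p ≤ 1) (𝒜 : Finset (Finset (Sym2 (V d))))
    (h𝒜 : ∀ A ∈ 𝒜, IsAnimal d A ∧ ∃ e ∈ A, (0 : V d) ∈ e) :
    ∑ A ∈ 𝒜, p ^ A.card * (1 - p) ^ (outlying d A).ncard ≤ 1 - (1 - p) ^ (2 * d) := by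
  classical
  set F : Finset (Sym2 (V d)) :=
    edgesAt (0 : V d) ∪ 𝒜.biUnion (fun A => A ∪ outF d A) with hF
  have hW : ∀ ω, (0:ℝ) ≤ p ^ ω.card * (1 - p) ^ (F \ ω).card :=
    fun ω => mul_nonneg (pow_nonneg hp0 _) (pow_nonneg (by linarith) _)
  set E : Finset (Sym2 (V d)) → Finset (Finset (Sym2 (V d))) := fun A =>
    F.powerset.filter (fun ω => A ⊆ ω ∧ Disjoint (outF d A) ω) with hE
  have hAF : ∀ A ∈ 𝒜, A ⊆ F := by
    intro A hA a ha
    exact Finset.mem_union_right _ (Finset.mem_biUnion.mpr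
      ⟨A, hA, Finset.mem_union_left _ ha⟩)
  have houtF : ∀ A ∈ 𝒜, outF d A ⊆ F := by
    intro A hA a ha
    exact Finset.mem_union_right _ (Finset.mem_biUnion.mpr
      ⟨A, hA, Finset.mem_union_right _ ha⟩)
  have hdisjAO : ∀ A : Finset (Sym2 (V d)), Disjoint A (outF d A) := by
    intro A
    rw [Finset.disjoint_right]
    intro a ha
    exact (mem_outF.mp ha).2.1
  -- each term equals sum over the event
  have hterm : ∀ A ∈ 𝒜, p ^ A.card * (1 - p) ^ (outlying d A).ncard
      = ∑ ω ∈ E A, p ^ ω.card * (1 - p) ^ (F \ ω).card := by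
    intro A hA
    rw [← card_outF, ← cyl_sum F A (outF d A) (hAF A hA) (houtF A hA) (hdisjAO A) p]
  -- events pairwise disjoint
  have hpair : (↑𝒜 : Set (Finset (Sym2 (V d)))).PairwiseDisjoint E := by
    intro A hA B hB hAB
    rw [Function.onFun, Finset.disjoint_left]
    intro ω hωA hωB
    simp only [hE, Finset.mem_filter] at hωA hωB
    exact hAB (animal_eq (h𝒜 A hA).1 (h𝒜 B hB).1 (h𝒜 A hA).2 (h𝒜 B hB).2
      hωA.2.1 hωA.2.2 hωB.2.1 hωB.2.2)
  calc ∑ A ∈ 𝒜, p ^ A.card * (1 - p) ^ (outlying d A).ncard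
      = ∑ A ∈ 𝒜, ∑ ω ∈ E A, p ^ ω.card * (1 - p) ^ (F \ ω).card :=
        Finset.sum_congr rfl hterm
    _ = ∑ ω ∈ 𝒜.biUnion E, p ^ ω.card * (1 - p) ^ (F \ ω).card :=
        (Finset.sum_biUnion hpair).symm
    _ ≤ ∑ ω ∈ F.powerset.filter (fun ω => ¬ Disjoint (edgesAt (0 : V d)) ω),
          p ^ ω.card * (1 - p) ^ (F \ ω).card := by
        refine Finset.sum_le_sum_of_subset_of_nonneg ?_ (fun ω _ _ => hW ω)
        intro ω hω
        obtain ⟨A, hA, hωA⟩ := Finset.mem_biUnion.mp hω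
        simp only [hE, Finset.mem_filter] at hωA
        obtain ⟨e, he, h0e⟩ := (h𝒜 A hA).2
        refine Finset.mem_filter.mpr ⟨hωA.1, ?_⟩
        rw [Finset.not_disjoint_iff]
        exact ⟨e, mem_edgesAt.mpr ⟨(h𝒜 A hA).1.1 e he, h0e⟩, hωA.2.1 he⟩
    _ = 1 - (1 - p) ^ (2 * d) := by
        have htot := total_sum F p
        have hsplit := Finset.sum_filter_add_sum_filter_not F.powerset
          (fun ω => Disjoint (edgesAt (0 : V d)) ω)
          (fun ω => p ^ ω.card * (1 - p) ^ (F \ ω).card)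
        have hclosed : ∑ ω ∈ F.powerset.filter (fun ω => Disjoint (edgesAt (0 : V d)) ω),
            p ^ ω.card * (1 - p) ^ (F \ ω).card = (1 - p) ^ (2 * d) := by
          have := cyl_sum F ∅ (edgesAt (0 : V d)) (Finset.empty_subset F)
            (Finset.subset_union_left) (Finset.disjoint_left.mpr (by simp)) p
          rw [Finset.card_empty, pow_zero, one_mul, card_edgesAt] at this
          rw [← this]
          refine Finset.sum_congr ?_ (fun _ _ => rfl)
          ext ω
          simp [Finset.empty_subset]
        rw [← hsplit] at htot
        rw [hclosed] at htot
        linarith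
-- the set of animals with given statistics, as a Finset
def animSet (d n m : ℕ) : Set (Finset (Sym2 (V d))) :=
  {A | IsAnimal d A ∧ (∃ e ∈ A, (0 : V d) ∈ e) ∧ A.card = n ∧ (outlying d A).ncard = m}

open Classical in
def animFin (d n m : ℕ) : Finset (Finset (Sym2 (V d))) :=
  if h : (animSet d n m).Finite then h.toFinset else ∅

lemma mem_animFin {n m : ℕ} {A : Finset (Sym2 (V d))} (h : A ∈ animFin d n m) :
    A ∈ animSet d n m := by
  rw [animFin] at h
  split at h
  · exact (Set.Finite.mem_toFinset _).mp h
  · exact absurd h (Finset.notMem_empty A)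

lemma sigmaA_term_eq (n m : ℕ) (p : ℝ) :
    (sigmaA d n m : ℝ) * p ^ n * (1 - p) ^ m
      = ∑ A ∈ animFin d n m, p ^ A.card * (1 - p) ^ (outlying d A).ncard := by
  rw [animFin]
  split
  case isTrue h =>
    have hcard : (sigmaA d n m : ℝ) = (h.toFinset.card : ℝ) := by
      norm_cast
      exact Set.ncard_eq_toFinset_card _ h
    have hsum : ∑ A ∈ h.toFinset, p ^ A.card * (1 - p) ^ (outlying d A).ncard
        = ∑ _A ∈ h.toFinset, p ^ n * (1 - p) ^ m := by
      refine Finset.sum_congr rfl fun A hA => ?_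
      obtain ⟨-, -, hc, ho⟩ := (Set.Finite.mem_toFinset _).mp hA
      rw [hc, ho]
    rw [hsum, Finset.sum_const, nsmul_eq_mul, hcard]
    ring
  case isFalse h =>
    have : sigmaA d n m = 0 := by
      rw [sigmaA]
      exact Set.Infinite.ncard (fun hf => h hf)
    rw [this]
    simp

lemma SN_le (N : ℕ) {p : ℝ} (hp0 : 0 ≤ p) (hp1 : p ≤ 1) :
    ∑ n ∈ Finset.Icc 1 N, Fsum d n p ≤ 1 - (1 - p) ^ (2 * d) := by
  classical
  have hrw : ∑ n ∈ Finset.Icc 1 N, Fsum d n p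
      = ∑ q ∈ (Finset.Icc 1 N).sigma (fun n => Finset.range (4 * d * n + 1)),
          ∑ A ∈ animFin d q.1 q.2, p ^ A.card * (1 - p) ^ (outlying d A).ncard := by
    rw [Finset.sum_sigma]
    refine Finset.sum_congr rfl fun n _ => ?_
    rw [Fsum_eq]
    exact Finset.sum_congr rfl fun m _ => sigmaA_term_eq n m p
  rw [hrw]
  set T := (Finset.Icc 1 N).sigma (fun n => Finset.range (4 * d * n + 1)) with hT
  have hpair : (↑T : Set ((_ : ℕ) × ℕ)).PairwiseDisjoint (fun q => animFin d q.1 q.2) := by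
    intro q _ q' _ hqq'
    rw [Function.onFun, Finset.disjoint_left]
    intro A hA hA'
    obtain ⟨-, -, hc, ho⟩ := mem_animFin hA
    obtain ⟨-, -, hc', ho'⟩ := mem_animFin hA'
    exact hqq' (Sigma.ext (by omega) (by simp; omega))
  rw [← Finset.sum_biUnion hpair]
  refine key_ineq hp0 hp1 _ fun A hA => ?_
  obtain ⟨q, -, hq⟩ := Finset.mem_biUnion.mp hA
  obtain ⟨h1, h2, -, -⟩ := mem_animFin hq
  exact ⟨h1, h2⟩

lemma SN_eq_range (N : ℕ) (p : ℝ) :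
    ∑ n ∈ Finset.Icc 1 N, Fsum d n p = ∑ k ∈ Finset.range N, Fsum d (k + 1) p := by
  induction N with
  | zero => simp
  | succ n ih =>
    rw [Finset.sum_range_succ, ← ih, Finset.sum_Icc_succ_top (by omega)]

lemma summable_Fsum {p : ℝ} (hp0 : 0 ≤ p) (hp1 : p ≤ 1) :
    Summable (fun n => Fsum d (n + 1) p) := by
  refine summable_of_sum_range_le (c := 1) (fun n => Fsum_nonneg hp0 hp1 _) fun N => ?_
  rw [← SN_eq_range]
  have h1 : (0:ℝ) ≤ (1 - p) ^ (2 * d) := pow_nonneg (by linarith) _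
  linarith [SN_le (d := d) N hp0 hp1]

lemma theta_nonneg {p : ℝ} (hp0 : 0 ≤ p) (hp1 : p ≤ 1) : 0 ≤ theta d p := by
  rw [theta]
  have := Real.tsum_le_of_sum_range_le (f := fun n => Fsum d (n + 1) p)
    (fun n => Fsum_nonneg hp0 hp1 _) (fun N => by
      rw [← SN_eq_range]; exact SN_le N hp0 hp1)
  linarith

lemma SN_le_sigma (N : ℕ) {p : ℝ} (hp0 : 0 ≤ p) (hp1 : p ≤ 1) :
    ∑ n ∈ Finset.Icc 1 N, Fsum d n p ≤ ∑' n : ℕ, Fsum d (n + 1) p := by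
  rw [SN_eq_range]
  exact Summable.sum_le_tsum _ (fun n _ => Fsum_nonneg hp0 hp1 _) (summable_Fsum hp0 hp1)

lemma theta_zero_at_zero : theta d 0 = 0 := by
  rw [theta]
  have h : ∀ n : ℕ, Fsum d (n + 1) (0:ℝ) = 0 := by
    intro n
    rw [Fsum_eq]
    refine Finset.sum_eq_zero fun m _ => by simp
  simp [h]
lemma pc_nonneg : 0 ≤ pc d :=
  Real.sInf_nonneg (fun _ hx => hx.1.le)

lemma pc_lt_one (h : 0 < pc d) : pc d < 1 := by
  rcases Set.eq_empty_or_nonempty {p : ℝ | 0 < p ∧ p < 1 ∧ 0 < theta d p} with he | ⟨x, hx⟩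
  · rw [pc, he, Real.sInf_empty] at h
    exact absurd h (lt_irrefl 0)
  · have hle : pc d ≤ x := csInf_le ⟨0, fun y hy => hy.1.le⟩ hx
    exact lt_of_le_of_lt hle hx.2.1

lemma theta_eq_zero_of_lt {p : ℝ} (h0 : 0 < p) (hlt : p < pc d) : theta d p = 0 := by
  have hpc1 : pc d < 1 := pc_lt_one (lt_trans h0 hlt)
  have hp1 : p < 1 := hlt.trans hpc1
  refine le_antisymm ?_ (theta_nonneg h0.le hp1.le)
  by_contra hc
  push_neg at hc
  have hmem : p ∈ {q : ℝ | 0 < q ∧ q < 1 ∧ 0 < theta d q} := ⟨h0, hp1, hc⟩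
  have : pc d ≤ p := csInf_le ⟨0, fun y hy => hy.1.le⟩ hmem
  exact absurd hlt (not_lt.mpr this)

lemma theta_decomp (p : ℝ) :
    theta d p = (1 - (1 - p) ^ (2 * d)) - ∑' n : ℕ, Fsum d (n + 1) p := by
  rw [theta]

end Work

/-- Lemma 4.2: `θ(p_c) = 0` if and only if the functions
`σ_N(p) = Σ_{1 ≤ n ≤ N} Σ_m σ_{n,m} p^n (1-p)^m` converge uniformly on `(0, p_c)`
to `σ(p) = Σ_{n ≥ 1} Σ_m σ_{n,m} p^n (1-p)^m`. -/
theorem stmt11 (d : ℕ) (hd : 2 ≤ d) :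
    theta d (pc d) = 0 ↔
      TendstoUniformlyOn (fun (N : ℕ) (p : ℝ) => ∑ n ∈ Finset.Icc 1 N, Fsum d n p)
        (fun p => ∑' n : ℕ, Fsum d (n + 1) p) atTop (Set.Ioo 0 (pc d)) := by
  classical
  rcases eq_or_lt_of_le (Work.pc_nonneg (d := d)) with h0 | hpc
  · constructor
    · intro _
      have hempty : Set.Ioo (0:ℝ) (pc d) = ∅ := by
        rw [← h0]; exact Set.Ioo_self 0
      rw [hempty]
      exact tendstoUniformlyOn_empty
    · intro _
      rw [← h0]
      exact Work.theta_zero_at_zero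
  · have h1 : pc d < 1 := Work.pc_lt_one hpc
    set L : ℝ → ℝ := fun p => 1 - (1 - p) ^ (2 * d) with hL
    set σf : ℝ → ℝ := fun p => ∑' n : ℕ, Fsum d (n + 1) p with hσ
    set SN : ℕ → ℝ → ℝ := fun N p => ∑ n ∈ Finset.Icc 1 N, Fsum d n p with hSN
    have hθdec : ∀ p, theta d p = L p - σf p := fun p => Work.theta_decomp p
    have hcontSN : ∀ N, Continuous (SN N) :=
      fun N => continuous_finset_sum _ fun n _ => Work.continuous_Fsum n
    have hcontL : Continuous L := by fun_prop
    have hσL : ∀ p ∈ Set.Ioo (0:ℝ) (pc d), σf p = L p := by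
      intro p hp
      have := Work.theta_eq_zero_of_lt hp.1 hp.2
      rw [hθdec] at this
      linarith
    have hmono : ∀ (N M : ℕ) (p : ℝ), N ≤ M → 0 ≤ p → p ≤ 1 → SN N p ≤ SN M p := by
      intro N M p hNM hp0 hp1
      exact Finset.sum_le_sum_of_subset_of_nonneg
        (Finset.Icc_subset_Icc_right hNM) (fun n _ _ => Work.Fsum_nonneg hp0 hp1 n)
    constructor
    · -- θ(pc) = 0 → uniform convergence
      intro hθ
      rw [Metric.tendstoUniformlyOn_iff]
      intro ε hε
      set U : ℕ → Set ℝ := fun N => (fun p => L p - SN N p) ⁻¹' Set.Iio ε with hU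
      have hUopen : ∀ N, IsOpen (U N) :=
        fun N => (hcontL.sub (hcontSN N)).isOpen_preimage _ isOpen_Iio
      have hcover : Set.Icc (0:ℝ) (pc d) ⊆ ⋃ N, U N := by
        intro p hp
        have hp0 : 0 ≤ p := hp.1
        have hp1 : p ≤ 1 := hp.2.trans h1.le
        have hθp : theta d p = 0 := by
          rcases eq_or_lt_of_le hp.2 with hpe | hplt
          · rw [hpe]; exact hθ
          · rcases eq_or_lt_of_le hp.1 with hpe0 | hp0'
            · rw [← hpe0]; exact Work.theta_zero_at_zero
            · exact Work.theta_eq_zero_of_lt hp0' hplt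
        have hsum := Work.summable_Fsum (d := d) hp0 hp1
        have hit : Tendsto (fun N => SN N p) atTop (𝓝 (σf p)) := by
          have h2 := hsum.hasSum.tendsto_sum_nat
          exact h2.congr (fun N => (Work.SN_eq_range N p).symm)
        have hlim : Tendsto (fun N => L p - SN N p) atTop (𝓝 (theta d p)) := by
          rw [hθdec]
          exact tendsto_const_nhds.sub hit
        rw [hθp] at hlim
        obtain ⟨N, hN⟩ := (hlim.eventually_lt_const hε).exists
        exact Set.mem_iUnion.mpr ⟨N, hN⟩
      obtain ⟨t, ht⟩ := isCompact_Icc.elim_finite_subcover U hUopen hcover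
      refine Filter.eventually_atTop.mpr ⟨t.sup id, fun N hN p hp => ?_⟩
      have hp0 : 0 ≤ p := hp.1.le
      have hp1 : p ≤ 1 := (hp.2.trans h1).le
      have hpK : p ∈ Set.Icc (0:ℝ) (pc d) := Set.Ioo_subset_Icc_self hp
      obtain ⟨N1, hN1t, hN1⟩ := Set.mem_iUnion₂.mp (ht hpK)
      have hN1N : N1 ≤ N := le_trans (Finset.le_sup (f := id) hN1t) hN
      simp only [hU, Set.mem_preimage, Set.mem_Iio] at hN1
      have hlt : L p - SN N p < ε :=
        lt_of_le_of_lt (by linarith [hmono N1 N p hN1N hp0 hp1]) hN1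
      have hnonneg : SN N p ≤ σf p := by
        rw [hσ]
        exact Work.SN_le_sigma N hp0 hp1
      rw [Real.dist_eq, abs_of_nonneg (by linarith), hσL p hp]
      exact hlt
    · -- uniform convergence → θ(pc) = 0
      intro hu
      have hge : 0 ≤ theta d (pc d) := Work.theta_nonneg hpc.le h1.le
      have hle : ∀ ε > (0:ℝ), theta d (pc d) ≤ ε := by
        intro ε hε
        rw [Metric.tendstoUniformlyOn_iff] at hu
        obtain ⟨N, hN⟩ := (hu ε hε).exists
        have hbound : ∀ p ∈ Set.Ioo (0:ℝ) (pc d), L p - SN N p ≤ ε := by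
          intro p hp
          have := hN p hp
          rw [Real.dist_eq] at this
          have h2 := abs_le.mp this.le
          rw [hσL p hp] at h2
          linarith [h2.2]
        have hne : (𝓝[Set.Ioo (0:ℝ) (pc d)] (pc d)).NeBot := by
          refine mem_closure_iff_nhdsWithin_neBot.mp ?_
          rw [closure_Ioo (ne_of_lt hpc)]
          exact ⟨hpc.le, le_refl _⟩
        have hlim : Tendsto (fun p => L p - SN N p) (𝓝[Set.Ioo (0:ℝ) (pc d)] (pc d))
            (𝓝 (L (pc d) - SN N (pc d))) :=
          ((hcontL.sub (hcontSN N)).tendsto (pc d)).mono_left nhdsWithin_le_nhds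
        have hgpc : L (pc d) - SN N (pc d) ≤ ε :=
          le_of_tendsto hlim (Filter.eventually_inf_principal.mpr
            (Filter.Eventually.of_forall hbound))
        have hSNle : SN N (pc d) ≤ σf (pc d) := Work.SN_le_sigma N hpc.le h1.le
        rw [hθdec]
        have : σf (pc d) = ∑' n : ℕ, Fsum d (n + 1) (pc d) := rfl
        linarith [hgpc, hSNle]
      by_contra hcne
      have hpos : 0 < theta d (pc d) := lt_of_le_of_ne hge (Ne.symm hcne)
      have := hle (theta d (pc d) / 2) (by linarith)
      linarith
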